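/- arXiv:1803.10278 — 3 statements merged into one kernel-verified Lean document; each statement's English description precedes it below -/
import Mathlib

section
/- For any positive integers i and t with 1 ≤ i ≤ t−1, the i-fold convolution of Catalan numbers satisfies ∑_{a_1+⋯+a_i = t−1, each a_j ≥ 1} ∏_{j=1}^{i} C_{a_j−1} = (i/(2t−i−2)) · C(2t−i−2, t−1), where C_k = (1/(k+1))·C(2k,k) is the k-th Catalan number. -/
/-!
Shifting every part down by one turns the sum into the coefficient of `x ^ (t - 1 - i)` in
`C(x) ^ i`, where `C = ∑ catalan n xⁿ`. Multiplying `C = 1 + x C²` by `C ^ k` gives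
`C ^ (k + 1) = C ^ k + x C ^ (k + 2)`, a Pascal-type recurrence for the coefficients
`[x ^ m] C ^ k`. The ballot numbers `k / (2m + k) · binom(2m + k, m + k)` satisfy the same
recurrence and boundary values, so the two agree by induction.
-/

open Finset PowerSeries

theorem PowerSeries.coeff_pow_eq_sum_antidiagonalTuple {R : Type*} [CommSemiring R]
    (φ : R⟦X⟧) (k n : ℕ) :
    coeff n (φ ^ k) = ∑ a ∈ Nat.antidiagonalTuple k n, ∏ j, coeff (a j) φ := by
  rw [← Fin.prod_const, coeff_prod]
  refine sum_nbij' (⇑) Finsupp.equivFunOnFinite.symm ?_ ?_ ?_ ?_ ?_ <;> intro a ha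
  · simpa [Nat.mem_antidiagonalTuple] using ha
  · simpa [Nat.mem_antidiagonalTuple] using ha
  · exact Finsupp.equivFunOnFinite.symm_apply_apply a
  · rfl
  · rfl

theorem Finset.Nat.sum_filter_one_le_antidiagonalTuple {M : Type*} [AddCommMonoid M] {k n : ℕ}
    (hkn : k ≤ n) (g : (Fin k → ℕ) → M) :
    ∑ a ∈ (Nat.antidiagonalTuple k n).filter (fun a => ∀ j, 1 ≤ a j), g (fun j => a j - 1) =
      ∑ b ∈ Nat.antidiagonalTuple k (n - k), g b := by
  refine sum_nbij' (fun a j => a j - 1) (fun b j => b j + 1) ?_ ?_ ?_ ?_ ?_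
  · intro a ha
    simp only [mem_filter, Nat.mem_antidiagonalTuple] at ha ⊢
    rw [sum_tsub_distrib _ fun j _ => ha.2 j, ha.1]
    simp
  · intro b hb
    simp only [mem_filter, Nat.mem_antidiagonalTuple] at hb ⊢
    simp [sum_add_distrib, hb, hkn]
  · intro a ha
    funext j
    have := (mem_filter.1 ha).2 j
    dsimp only
    omega
  · intro b _
    funext j
    simp
  · intro a _
    rfl

theorem PowerSeries.catalanSeries_pow_succ (k : ℕ) :
    catalanSeries ^ (k + 1) = catalanSeries ^ k + X * catalanSeries ^ (k + 2) := by
  calc catalanSeries ^ (k + 1) = catalanSeries ^ k * catalanSeries := pow_succ _ _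
    _ = catalanSeries ^ k * (catalanSeries ^ 2 * X + 1) := by rw [catalanSeries_sq_mul_X_add_one]
    _ = catalanSeries ^ k + X * catalanSeries ^ (k + 2) := by ring

theorem PowerSeries.coeff_succ_catalanSeries_pow_succ (k m : ℕ) :
    coeff (m + 1) (catalanSeries ^ (k + 1)) =
      coeff (m + 1) (catalanSeries ^ k) + coeff m (catalanSeries ^ (k + 2)) := by
  rw [catalanSeries_pow_succ, map_add, coeff_succ_X_mul]

def ballotNumber (k m : ℕ) : ℚ := k / (2 * m + k) * (2 * m + k).choose (m + k)

theorem ballotNumber_zero_right {k : ℕ} (hk : k ≠ 0) : ballotNumber k 0 = 1 := by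
  simp [ballotNumber, hk]

theorem ballotNumber_zero_left (m : ℕ) : ballotNumber 0 m = 0 := by
  simp [ballotNumber]

theorem ballotNumber_succ_succ (k m : ℕ) :
    ballotNumber (k + 1) (m + 1) = ballotNumber k (m + 1) + ballotNumber (k + 2) m := by
  have pascal := Nat.choose_succ_succ' (2 * m + k + 2) (m + k + 1)
  have ratio := Nat.choose_succ_right_eq (2 * m + k + 2) (m + k + 1)
  rw [show 2 * m + k + 2 - (m + k + 1) = m + 1 by omega] at ratio
  have ratioQ : ((2 * m + k + 2).choose (m + k + 1 + 1) : ℚ) * (m + k + 1 + 1) =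
      (2 * m + k + 2).choose (m + k + 1) * (m + 1) := by exact_mod_cast ratio
  simp only [ballotNumber, show 2 * (m + 1) + (k + 1) = 2 * m + k + 2 + 1 by ring,
    show 2 * (m + 1) + k = 2 * m + k + 2 by ring, show 2 * m + (k + 2) = 2 * m + k + 2 by ring,
    show m + 1 + (k + 1) = m + k + 1 + 1 by ring, show m + 1 + k = m + k + 1 by ring,
    show m + (k + 2) = m + k + 1 + 1 by ring, pascal]
  push_cast
  field_simp
  linear_combination (-2 : ℚ) * ((2 : ℚ) * m + k + 2) * ratioQ

theorem PowerSeries.coeff_catalanSeries_pow {k m : ℕ} (h : k ≠ 0 ∨ m ≠ 0) :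
    ((coeff m (catalanSeries ^ k) : ℕ) : ℚ) = ballotNumber k m := by
  induction m generalizing k with
  | zero =>
    have hk : k ≠ 0 := by simpa using h
    simp [ballotNumber_zero_right hk]
  | succ m ihm =>
    induction k with
    | zero => simp [ballotNumber_zero_left]
    | succ k ihk =>
      rw [coeff_succ_catalanSeries_pow_succ, ballotNumber_succ_succ, Nat.cast_add,
        ihk (by simp), ihm (by simp)]

theorem catalan_convolution_general (t i : ℕ) (hi1 : 1 ≤ i) (hi2 : i ≤ t - 1) :
    ∑ a ∈ (Finset.Nat.antidiagonalTuple i (t - 1)).filter (fun a => ∀ j, 1 ≤ a j),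
        ∏ j, (catalan (a j - 1) : ℚ)
      = (i : ℚ) / (2 * (t : ℚ) - i - 2) * ((2 * t - i - 2).choose (t - 1) : ℚ) := by
  have hsum := Nat.sum_filter_one_le_antidiagonalTuple hi2 fun b => ∏ j, (catalan (b j) : ℚ)
  have hcoeff : ((coeff (t - 1 - i) (catalanSeries ^ i) : ℕ) : ℚ) =
      ∑ b ∈ Nat.antidiagonalTuple i (t - 1 - i), ∏ j, (catalan (b j) : ℚ) := by
    simp [coeff_pow_eq_sum_antidiagonalTuple]
  rw [hsum, ← hcoeff, coeff_catalanSeries_pow (Or.inl (by omega)), ballotNumber,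
    show 2 * (t - 1 - i) + i = 2 * t - i - 2 by omega, show t - 1 - i + i = t - 1 by omega]
  congr 2
  push_cast [Nat.cast_sub hi2, Nat.cast_sub (by omega : 1 ≤ t)]
  ring

/-- Catalan i-fold convolution: for `t ≥ 2` and `1 ≤ i ≤ t−1`,
`∑_{a_1+⋯+a_i = t−1, a_j ≥ 1} ∏_j C_{a_j−1} = (i/(2t−i−2)) · C(2t−i−2, t−1)`. -/
theorem catalan_convolution (t i : ℕ) (ht : 2 ≤ t) (hi1 : 1 ≤ i) (hi2 : i ≤ t - 1) :
    ∑ a ∈ (Finset.Nat.antidiagonalTuple i (t - 1)).filter (fun a => ∀ j, 1 ≤ a j),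
        ∏ j, (catalan (a j - 1) : ℚ)
      = (i : ℚ) / (2 * (t : ℚ) - i - 2) * ((2 * t - i - 2).choose (t - 1) : ℚ) :=
  catalan_convolution_general t i hi1 hi2
end

section
/- For every real x with |x| < 1, the power series identity ∑_{k=1}^{∞} k · C(2k, k) · (x/4)^k = x / (2(1−x)^{3/2}) holds. -/
/-!
Multiplying by `x / 2` the binomial series `(1 - x)^(-3/2) = ∑ multichoose(3/2, k) xᵏ` gives the
claim, because `(k + 1) C(2k+2, k+1) = 2 · 4ᵏ · multichoose(3/2, k)`. Multiplied by `k!`, the right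
side becomes `2 · 4ᵏ · (3/2)(5/2)⋯(k + 1/2)`, and both sides then pick up the factor `2(2k + 3)`
when `k` increases by one.
-/

open Nat

theorem factorial_mul_succ_mul_centralBinom_succ (k : ℕ) :
    (k ! : ℝ) * ((k + 1) * (k + 1).centralBinom) =
      2 * 4 ^ k * (ascPochhammer ℝ k).eval (3 / 2) := by
  induction k with
  | zero => simp [centralBinom_eq_two_mul_choose]
  | succ k ih =>
    have h := congrArg (Nat.cast : ℕ → ℝ) (succ_mul_centralBinom_succ (k + 1))
    push_cast at h ⊢
    rw [factorial_succ, ascPochhammer_succ_eval]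
    push_cast
    linear_combination (2 * (2 * (k : ℝ) + 3)) * ih + (k ! : ℝ) * (k + 1) * h

theorem succ_mul_centralBinom_succ_eq_multichoose (k : ℕ) :
    ((k + 1) * (k + 1).centralBinom : ℝ) = 2 * 4 ^ k * Ring.multichoose (3 / 2 : ℝ) k := by
  have h := Ring.factorial_nsmul_multichoose_eq_ascPochhammer (3 / 2 : ℝ) k
  rw [Polynomial.ascPochhammer_smeval_eq_eval, nsmul_eq_mul] at h
  apply mul_left_cancel₀ (show (k ! : ℝ) ≠ 0 by positivity)
  rw [factorial_mul_succ_mul_centralBinom_succ, ← h]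
  ring

theorem succ_mul_choose_mul_div_four_pow (x : ℝ) (k : ℕ) :
    ((k + 1 : ℕ) : ℝ) * ((2 * (k + 1)).choose (k + 1) : ℝ) * (x / 4) ^ (k + 1) =
      x / 2 * (Ring.multichoose (3 / 2 : ℝ) k * x ^ k) := by
  rw [← centralBinom_eq_two_mul_choose]
  push_cast
  rw [succ_mul_centralBinom_succ_eq_multichoose, div_pow]
  field_simp
  ring

theorem hasSum_multichoose_mul_pow {a x : ℝ} (hx : |x| < 1) :
    HasSum (fun n ↦ Ring.multichoose a n * x ^ n) (1 / (1 - x) ^ a) := by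
  have := (Real.one_div_one_sub_rpow_hasFPowerSeriesOnBall_zero a).hasSum (y := x)
    (by simpa [enorm_eq_nnnorm, ← NNReal.coe_lt_coe] using hx)
  simpa [FormalMultilinearSeries.ofScalars_apply_eq, Ring.multichoose_eq, mul_comm] using this

/-- For `|x| < 1`, `∑_{k≥1} k·C(2k,k)·(x/4)^k = x / (2(1−x)^{3/2})`. -/
theorem central_binom_series_deriv (x : ℝ) (hx : |x| < 1) :
    ∑' k : ℕ, (k : ℝ) * ((2 * k).choose k : ℝ) * (x / 4) ^ k
      = x / (2 * (1 - x) ^ ((3 : ℝ) / 2)) := by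
  have hshift := (hasSum_multichoose_mul_pow (a := 3 / 2) hx).mul_left (x / 2)
  simp_rw [← succ_mul_choose_mul_div_four_pow] at hshift
  rw [(HasSum.zero_add (f := fun k : ℕ ↦ (k : ℝ) * ((2 * k).choose k : ℝ) * (x / 4) ^ k)
    hshift).tsum_eq]
  simp only [Nat.cast_zero, zero_mul, zero_add]
  ring
end

section
/- The sum 1 + 8·∑_{k=1}^{∞} k·(3/16)^k·C(2k−1,k) + 4·∑_{k=0}^{∞} (3/16)^k·C(2k−1,k) equals 19 (with the k = 0 term of the last sum equal to 1). -/
open Finset Polynomial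

private lemma cast_cb_succ (n : ℕ) :
    ((n : ℝ) + 1) * (Nat.centralBinom (n+1) : ℝ) = 2 * (2*n+1) * Nat.centralBinom n := by
  exact_mod_cast congrArg (fun m : ℕ => (m : ℝ)) (Nat.succ_mul_centralBinom_succ n)

private lemma desc_smeval_neg_half (n : ℕ) :
    (descPochhammer ℤ n).smeval (-(1/2) : ℝ)
      = (-(1/4 : ℝ)) ^ n * (Nat.centralBinom n) * (Nat.factorial n) := by
  induction n with
  | zero => simp [descPochhammer_zero, smeval_one]
  | succ n ih =>
    rw [descPochhammer_succ_right, smeval_mul, ih, smeval_sub, smeval_X, smeval_natCast]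
    have h' := cast_cb_succ n
    rw [pow_succ, Nat.factorial_succ]
    push_cast
    linear_combination ((-(1/4:ℝ))^n * (1/4) * (Nat.factorial n : ℝ)) * h'

private lemma desc_smeval_neg_one (n : ℕ) :
    (descPochhammer ℤ n).smeval (-1 : ℝ) = (-1) ^ n * (Nat.factorial n) := by
  induction n with
  | zero => simp [descPochhammer_zero, smeval_one]
  | succ n ih =>
    rw [descPochhammer_succ_right, smeval_mul, ih, smeval_sub, smeval_X, smeval_natCast]
    rw [pow_succ, Nat.factorial_succ]
    push_cast
    ring

private lemma ring_choose_neg_half (n : ℕ) :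
    Ring.choose (-(1/2) : ℝ) n = (-(1/4)) ^ n * Nat.centralBinom n := by
  have h := Ring.descPochhammer_eq_factorial_smul_choose (-(1/2) : ℝ) n
  rw [desc_smeval_neg_half, nsmul_eq_mul] at h
  have hf : (Nat.factorial n : ℝ) ≠ 0 := by
    exact_mod_cast (Nat.factorial_ne_zero n)
  apply mul_left_cancel₀ hf
  rw [← h]; ring

private lemma ring_choose_neg_one (n : ℕ) :
    Ring.choose (-1 : ℝ) n = (-1) ^ n := by
  have h := Ring.descPochhammer_eq_factorial_smul_choose (-1 : ℝ) n
  rw [desc_smeval_neg_one, nsmul_eq_mul] at h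
  have hf : (Nat.factorial n : ℝ) ≠ 0 := by
    exact_mod_cast (Nat.factorial_ne_zero n)
  apply mul_left_cancel₀ hf
  rw [← h]; ring

private lemma cb_conv (n : ℕ) :
    ∑ ij ∈ antidiagonal n, (Nat.centralBinom ij.1 : ℝ) * Nat.centralBinom ij.2 = 4 ^ n := by
  have h := Ring.add_choose_eq (R := ℝ) (r := -(1/2)) (s := -(1/2)) n (Commute.all _ _)
  rw [show (-(1/2) + -(1/2) : ℝ) = -1 by norm_num, ring_choose_neg_one] at h
  simp only [ring_choose_neg_half] at h
  have key : (-1 : ℝ)^n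
      = (-(1/4 : ℝ))^n * ∑ ij ∈ antidiagonal n,
          (Nat.centralBinom ij.1 : ℝ) * Nat.centralBinom ij.2 := by
    rw [h, Finset.mul_sum]
    refine Finset.sum_congr rfl fun ij hij => ?_
    have hn : ij.1 + ij.2 = n := mem_antidiagonal.mp hij
    rw [← hn, pow_add]; ring
  set S := ∑ ij ∈ antidiagonal n, (Nat.centralBinom ij.1 : ℝ) * Nat.centralBinom ij.2
  rw [show (-(1/4 : ℝ)) = (-1) * (1/4) by norm_num, mul_pow] at key
  have h1 : ((-1 : ℝ))^n ≠ 0 := by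
    apply pow_ne_zero; norm_num
  have h2 : ((1/4 : ℝ))^n * S = 1 := by
    apply mul_left_cancel₀ h1
    rw [← mul_assoc, ← key, mul_one]
  have h3 : ((1/4 : ℝ))^n * (4:ℝ)^n = 1 := by
    rw [← mul_pow]; norm_num
  calc S = (((1/4:ℝ))^n * S) * 4^n := by
        rw [mul_comm ((1/4:ℝ)^n) S, mul_assoc, h3, mul_one]
    _ = 4^n := by rw [h2, one_mul]

private lemma cb_le_four_pow (k : ℕ) : (Nat.centralBinom k : ℝ) ≤ 4 ^ k := by
  have h : Nat.centralBinom k ≤ 4 ^ k := by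
    calc Nat.centralBinom k = (2*k).choose k := rfl
      _ ≤ (2*k+1).choose k := Nat.choose_le_choose k (Nat.le_succ _)
      _ ≤ 4 ^ k := Nat.choose_middle_le_pow k
  exact_mod_cast h

private lemma summable_b :
    Summable (fun k : ℕ => (Nat.centralBinom k : ℝ) * (3/16) ^ k) := by
  apply Summable.of_nonneg_of_le (fun k => by positivity)
    (f := fun k : ℕ => (3/4 : ℝ) ^ k)
  · intro k
    calc (Nat.centralBinom k : ℝ) * (3/16) ^ k ≤ 4 ^ k * (3/16) ^ k := by
          apply mul_le_mul_of_nonneg_right (cb_le_four_pow k) (by positivity)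
      _ = (3/4 : ℝ) ^ k := by rw [← mul_pow]; norm_num
  · exact summable_geometric_of_lt_one (by norm_num) (by norm_num)

private lemma summable_g :
    Summable (fun k : ℕ => (k : ℝ) * Nat.centralBinom k * (3/16) ^ k) := by
  apply Summable.of_nonneg_of_le (fun k => by positivity)
    (f := fun k : ℕ => (k : ℝ) * (3/4 : ℝ) ^ k)
  · intro k
    calc (k : ℝ) * Nat.centralBinom k * (3/16) ^ k
        ≤ (k : ℝ) * 4 ^ k * (3/16) ^ k := by
          apply mul_le_mul_of_nonneg_right _ (by positivity)
          exact mul_le_mul_of_nonneg_left (cb_le_four_pow k) (by positivity)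
      _ = (k : ℝ) * (3/4 : ℝ) ^ k := by rw [mul_assoc, ← mul_pow]; norm_num
  · simpa using summable_pow_mul_geometric_of_norm_lt_one (R := ℝ) 1
      (r := (3/4 : ℝ)) (by rw [Real.norm_eq_abs]; rw [abs_of_nonneg] <;> norm_num)

private lemma tsum_b_eq_two :
    ∑' k : ℕ, (Nat.centralBinom k : ℝ) * (3/16) ^ k = 2 := by
  set b : ℕ → ℝ := fun k => (Nat.centralBinom k : ℝ) * (3/16) ^ k with hb
  set f : ℝ := ∑' k, b k with hf
  have hnorm : Summable (fun k => ‖b k‖) := by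
    apply summable_b.congr
    intro k
    rw [Real.norm_eq_abs, abs_of_nonneg (by positivity)]
  have hff : f * f = 4 := by
    rw [hf, tsum_mul_tsum_eq_tsum_sum_antidiagonal_of_summable_norm hnorm hnorm]
    have : ∀ n : ℕ, ∑ ij ∈ antidiagonal n, b ij.1 * b ij.2 = (3/4 : ℝ) ^ n := by
      intro n
      have : ∑ ij ∈ antidiagonal n, b ij.1 * b ij.2
          = (∑ ij ∈ antidiagonal n,
              (Nat.centralBinom ij.1 : ℝ) * Nat.centralBinom ij.2) * (3/16)^n := by
        rw [Finset.sum_mul]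
        refine Finset.sum_congr rfl fun ij hij => ?_
        have hn : ij.1 + ij.2 = n := mem_antidiagonal.mp hij
        rw [hb]; simp only [← hn, pow_add]; ring
      rw [this, cb_conv, ← mul_pow]; norm_num
    rw [tsum_congr this, tsum_geometric_of_lt_one (by norm_num) (by norm_num)]
    norm_num
  have hge : (1 : ℝ) ≤ f := by
    have h0 : b 0 = 1 := by simp [hb]
    rw [← h0, hf]
    exact Summable.le_tsum summable_b 0 (fun j _ => by positivity)
  have h0 : (f - 2) * (f + 2) = 0 := by linear_combination hff
  rcases mul_eq_zero.mp h0 with h | h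
  · linarith
  · linarith

private lemma tsum_g_eq_three :
    ∑' k : ℕ, (k : ℝ) * Nat.centralBinom k * (3/16) ^ k = 3 := by
  set g : ℕ → ℝ := fun k => (k : ℝ) * Nat.centralBinom k * (3/16)^k with hg
  set T : ℝ := ∑' k, g k with hT
  have hshift : ∑' k : ℕ, g (k+1) = T := by
    have h := Summable.tsum_eq_zero_add (f := g) summable_g
    have h0 : g 0 = 0 := by simp [hg]
    rw [h0, zero_add] at h
    exact h.symm
  have hpt : ∀ k : ℕ, g (k+1)
      = (3/4) * g k + (3/8) * ((Nat.centralBinom k : ℝ) * (3/16)^k) := by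
    intro k
    have h' := cast_cb_succ k
    rw [hg]; simp only
    rw [pow_succ]
    push_cast
    linear_combination ((3:ℝ)/16 * (3/16 : ℝ)^k) * h'
  have hsum : T = (3/4) * T + (3/8) * 2 := by
    conv_lhs => rw [← hshift, tsum_congr hpt,
      Summable.tsum_add (summable_g.mul_left _) (summable_b.mul_left _),
      tsum_mul_left, tsum_mul_left, tsum_b_eq_two]
  linarith

private lemma cb_eq_two_mul_choose (j : ℕ) :
    (Nat.centralBinom (j+1) : ℝ) = 2 * ((2*(j+1)-1).choose (j+1) : ℝ) := by
  have hsym : (2*j+1).choose (j+1) = (2*j+1).choose j := by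
    rw [← Nat.choose_symm (by omega : j ≤ 2*j+1)]
    congr 1
    omega
  have hh : Nat.centralBinom (j+1) = 2 * ((2*(j+1)-1).choose (j+1)) := by
    have h1 : 2*(j+1)-1 = 2*j+1 := by omega
    rw [h1, Nat.centralBinom, show 2*(j+1) = (2*j+1)+1 from by ring,
      Nat.choose_succ_succ, hsym]
    ring
  exact_mod_cast hh

/-- `1 + 8·∑_{k≥1} k·(3/16)^k·C(2k−1,k) + 4·∑_{k≥0} (3/16)^k·C(2k−1,k) = 19`. -/
theorem mean_return_time_formula :
    1 + 8 * (∑' k : ℕ, (k : ℝ) * (3 / 16) ^ k * ((2 * k - 1).choose k : ℝ))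
      + 4 * (∑' k : ℕ, (3 / 16 : ℝ) ^ k * ((2 * k - 1).choose k : ℝ)) = 19 := by
  have hF : (∑' k : ℕ, (k : ℝ) * (3 / 16) ^ k * ((2 * k - 1).choose k : ℝ)) = 3/2 := by
    have hpt : ∀ k : ℕ, (k : ℝ) * (3 / 16) ^ k * ((2 * k - 1).choose k : ℝ)
        = (1/2) * ((k : ℝ) * Nat.centralBinom k * (3/16)^k) := by
      intro k
      cases k with
      | zero => simp
      | succ j =>
        rw [show ((2*(j+1)-1).choose (j+1) : ℝ)
            = (Nat.centralBinom (j+1) : ℝ) / 2 from by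
          rw [cb_eq_two_mul_choose]; ring]
        ring
    rw [tsum_congr hpt, tsum_mul_left, tsum_g_eq_three]
    norm_num
  have hG : (∑' k : ℕ, (3 / 16 : ℝ) ^ k * ((2 * k - 1).choose k : ℝ)) = 3/2 := by
    have hpt : ∀ k : ℕ, (3 / 16 : ℝ) ^ k * ((2 * k - 1).choose k : ℝ)
        = (1/2) * ((Nat.centralBinom k : ℝ) * (3/16)^k)
          + (if k = 0 then (1/2 : ℝ) else 0) := by
      intro k
      cases k with
      | zero => norm_num [Nat.centralBinom]
      | succ j =>
        rw [if_neg (Nat.succ_ne_zero j),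
          show ((2*(j+1)-1).choose (j+1) : ℝ)
            = (Nat.centralBinom (j+1) : ℝ) / 2 from by
          rw [cb_eq_two_mul_choose]; ring]
        ring
    rw [tsum_congr hpt,
      Summable.tsum_add (summable_b.mul_left _) (hasSum_ite_eq 0 (1/2 : ℝ)).summable,
      tsum_mul_left, tsum_b_eq_two, tsum_ite_eq]
    norm_num
  rw [hF, hG]
  norm_num
end
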